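/- Let q > 2. The two positive roots x₀(α) < x₁(α) of f(t) = t² - 1 - α t^q are differentiable functions of α on (0, α*(q)), with dx_k/dα = x_k^{q+1}/(q - (q-2)x_k²) for k = 0, 1; moreover dx₀/dα > 0 and dx₁/dα < 0 on (0, α*(q)). -/

import Mathlib

open Set Filter MeasureTheory

noncomputable def fQ (q α t : ℝ) : ℝ := t ^ 2 - 1 - α * t ^ q

noncomputable def alphaStar (q : ℝ) : ℝ := 2 / (q - 2) * ((q - 2) / q) ^ (q / 2)

noncomputable def x0 (q α : ℝ) : ℝ := sInf {t : ℝ | 0 < t ∧ fQ q α t = 0}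

noncomputable def x1 (q α : ℝ) : ℝ := sSup {t : ℝ | 0 < t ∧ fQ q α t = 0}

noncomputable def Iq (q α : ℝ) : ℝ := ∫ t in x0 q α..x1 q α, 1 / Real.sqrt (fQ q α t)

noncomputable def fQd1 (q α t : ℝ) : ℝ := 2 * t - α * q * t ^ (q - 1)

noncomputable def fQd2 (q α t : ℝ) : ℝ := 2 - α * q * (q - 1) * t ^ (q - 2)

noncomputable def fQd3 (q α t : ℝ) : ℝ := -(α * q * (q - 1) * (q - 2) * t ^ (q - 3))

noncomputable def psiQ (q α t : ℝ) : ℝ := fQd1 q α t ^ 2 - 2 * fQ q α t * fQd2 q α t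

/-!
A positive `t` is a root of `t² - 1 - α t^q` exactly when `α = g(t) := (t² - 1) / t^q`. Since
`g'(t) = (q - (q - 2) t²) / t^(q+1)`, the function `g` increases from `g(1) = 0` to
`g(c) = α*(q)` on `[1, c]`, where `c = √(q / (q - 2))`, and then decreases to `0` at infinity.
Hence for `0 < α < α*(q)` the roots are `x₀ ∈ (1, c)` and `x₁ > c`, and they are the inverses
of the two monotone branches of `g`; the inverse function theorem gives `dx_k/dα = 1 / g'(x_k)`.
-/

open Topology

section LocalInverse

variable {X Y : Type*} [LinearOrder X] [TopologicalSpace X] [OrderTopology X]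
  [DenselyOrdered X] [LinearOrder Y] [TopologicalSpace Y] [OrderTopology Y]

theorem StrictMonoOn.continuousAt_of_local_left_inverse {g : X → Y} {x : Y → X} {s : Set X}
    {a : Y} (hg : StrictMonoOn g s) (hgc : ContinuousAt g (x a)) (hs : s ∈ 𝓝 (x a))
    (hx : ∀ᶠ b in 𝓝 a, x b ∈ s ∧ g (x b) = b) : ContinuousAt x a := by
  set U := {b | x b ∈ s ∧ g (x b) = b}
  have hga : g (x a) = a := (mem_of_mem_nhds hx : a ∈ U).2
  have hxU : StrictMonoOn x U := fun b hb c hc hbc =>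
    lt_of_not_ge fun hcb => hbc.not_ge <| by
      simpa only [hb.2, hc.2] using hg.monotoneOn hc.1 hb.1 hcb
  refine hxU.continuousAt_of_image_mem_nhds hx (mem_of_superset (x := s ∩ g ⁻¹' U) ?_ ?_)
  · exact inter_mem hs (hgc.preimage_mem_nhds (by rw [hga]; exact hx))
  · rintro t ⟨hts, htU⟩
    exact ⟨g t, htU, hg.injOn htU.1 hts htU.2⟩

theorem StrictAntiOn.continuousAt_of_local_left_inverse {g : X → Y} {x : Y → X} {s : Set X}
    {a : Y} (hg : StrictAntiOn g s) (hgc : ContinuousAt g (x a)) (hs : s ∈ 𝓝 (x a))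
    (hx : ∀ᶠ b in 𝓝 a, x b ∈ s ∧ g (x b) = b) : ContinuousAt x a :=
  StrictMonoOn.continuousAt_of_local_left_inverse (X := Xᵒᵈ) (x := OrderDual.toDual ∘ x)
    hg.dual_left hgc hs hx

end LocalInverse

noncomputable def alphaOfRoot (q t : ℝ) : ℝ := (t ^ 2 - 1) / t ^ q

noncomputable def peak (q : ℝ) : ℝ := Real.sqrt (q / (q - 2))

section Roots

variable {q α t : ℝ}

theorem fQ_eq_zero_iff (ht : 0 < t) : fQ q α t = 0 ↔ alphaOfRoot q t = α := by
  rw [fQ, alphaOfRoot, div_eq_iff (Real.rpow_pos_of_pos ht q).ne', sub_eq_zero]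

theorem hasDerivAt_alphaOfRoot (ht : 0 < t) :
    HasDerivAt (alphaOfRoot q) ((q - (q - 2) * t ^ 2) / t ^ (q + 1)) t := by
  have hpow : t ^ (q + 1) = t ^ q * t := Real.rpow_add_one ht.ne' q
  refine (((hasDerivAt_pow 2 t).sub_const 1).div (Real.hasDerivAt_rpow_const (p := q)
    (Or.inl ht.ne')) (Real.rpow_pos_of_pos ht q).ne').congr_deriv ?_
  rw [Real.rpow_sub_one ht.ne', hpow]
  field_simp
  ring

theorem continuousOn_alphaOfRoot : ContinuousOn (alphaOfRoot q) (Ioi 0) := fun _ ht =>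
  (hasDerivAt_alphaOfRoot ht).continuousAt.continuousWithinAt

theorem alphaOfRoot_one : alphaOfRoot q 1 = 0 := by simp [alphaOfRoot]

theorem tendsto_alphaOfRoot_atTop (hq : 2 < q) : Tendsto (alphaOfRoot q) atTop (𝓝 0) := by
  have h := (tendsto_rpow_neg_atTop (by linarith : 0 < q - 2)).sub
    (tendsto_rpow_neg_atTop (by linarith : 0 < q))
  rw [sub_zero] at h
  refine h.congr' ((eventually_gt_atTop 0).mono fun t ht => ?_)
  rw [alphaOfRoot, neg_sub, Real.rpow_sub ht, Real.rpow_neg ht.le, Real.rpow_two, sub_div,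
    one_div]

theorem one_lt_peak (hq : 2 < q) : 1 < peak q := by
  rw [peak, Real.lt_sqrt zero_le_one, one_pow, one_lt_div (by linarith)]
  linarith

theorem peak_pos (hq : 2 < q) : 0 < peak q := zero_lt_one.trans (one_lt_peak hq)

theorem alphaOfRoot_peak (hq : 2 < q) : alphaOfRoot q (peak q) = alphaStar q := by
  have hd : 0 ≤ q / (q - 2) := div_nonneg (by linarith) (by linarith)
  have hsq : peak q ^ 2 - 1 = 2 / (q - 2) := by
    rw [peak, Real.sq_sqrt hd]
    field_simp [(by linarith : q - 2 ≠ 0)]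
    ring
  have hpow : peak q ^ q = (q / (q - 2)) ^ (q / 2) := by
    rw [peak, Real.sqrt_eq_rpow, ← Real.rpow_mul hd, one_div_mul_eq_div]
  rw [alphaOfRoot, hsq, hpow, alphaStar, div_eq_mul_inv, ← Real.inv_rpow hd, inv_div]

theorem sub_mul_sq_pos_iff_lt_peak (hq : 2 < q) (ht : 0 ≤ t) :
    0 < q - (q - 2) * t ^ 2 ↔ t < peak q := by
  rw [peak, Real.lt_sqrt ht, lt_div_iff₀ (by linarith), sub_pos, mul_comm]

theorem sub_mul_sq_neg_iff_peak_lt (hq : 2 < q) (ht : 0 ≤ t) :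
    q - (q - 2) * t ^ 2 < 0 ↔ peak q < t := by
  rw [peak, Real.sqrt_lt (div_nonneg (by linarith) (by linarith)) ht, div_lt_iff₀ (by linarith),
    sub_neg, mul_comm]

theorem strictMonoOn_alphaOfRoot (hq : 2 < q) : StrictMonoOn (alphaOfRoot q) (Ioc 0 (peak q)) := by
  refine strictMonoOn_of_deriv_pos (convex_Ioc 0 _)
    (continuousOn_alphaOfRoot.mono fun _ ht => ht.1) fun t ht => ?_
  rw [interior_Ioc] at ht
  rw [(hasDerivAt_alphaOfRoot ht.1).deriv]
  exact div_pos ((sub_mul_sq_pos_iff_lt_peak hq ht.1.le).2 ht.2) (Real.rpow_pos_of_pos ht.1 _)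

theorem strictAntiOn_alphaOfRoot (hq : 2 < q) : StrictAntiOn (alphaOfRoot q) (Ici (peak q)) := by
  refine strictAntiOn_of_deriv_neg (convex_Ici _)
    (continuousOn_alphaOfRoot.mono fun _ ht => (peak_pos hq).trans_le ht) fun t ht => ?_
  rw [interior_Ici] at ht
  have ht0 : 0 < t := (peak_pos hq).trans ht
  rw [(hasDerivAt_alphaOfRoot ht0).deriv]
  exact div_neg_of_neg_of_pos ((sub_mul_sq_neg_iff_peak_lt hq ht0.le).2 ht)
    (Real.rpow_pos_of_pos ht0 _)

theorem exists_mem_Ioo_alphaOfRoot_eq (hq : 2 < q) (hα : α ∈ Ioo 0 (alphaStar q)) :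
    ∃ a ∈ Ioo 1 (peak q), alphaOfRoot q a = α := by
  have := intermediate_value_Ioo (one_lt_peak hq).le
    ((continuousOn_alphaOfRoot (q := q)).mono fun _ ht => zero_lt_one.trans_le ht.1)
  rw [alphaOfRoot_one, alphaOfRoot_peak hq] at this
  exact this hα

theorem exists_peak_lt_alphaOfRoot_eq (hq : 2 < q) (hα : α ∈ Ioo 0 (alphaStar q)) :
    ∃ b, peak q < b ∧ alphaOfRoot q b = α := by
  obtain ⟨T, hTα, hT⟩ := (((tendsto_alphaOfRoot_atTop hq).eventually (gt_mem_nhds hα.1)).and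
    (eventually_gt_atTop (peak q))).exists
  have := intermediate_value_Ioo' hT.le
    ((continuousOn_alphaOfRoot (q := q)).mono fun _ ht => (peak_pos hq).trans_le ht.1)
  rw [alphaOfRoot_peak hq] at this
  obtain ⟨b, hb, hgb⟩ := this ⟨hTα, hα.2⟩
  exact ⟨b, hb.1, hgb⟩

theorem setOf_fQ_eq_zero_eq_pair (hq : 2 < q) (hα : α ∈ Ioo 0 (alphaStar q)) :
    ∃ a b, a ∈ Ioo 1 (peak q) ∧ peak q < b ∧ alphaOfRoot q a = α ∧ alphaOfRoot q b = α ∧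
      {t | 0 < t ∧ fQ q α t = 0} = {a, b} := by
  obtain ⟨a, ha, hga⟩ := exists_mem_Ioo_alphaOfRoot_eq hq hα
  obtain ⟨b, hb, hgb⟩ := exists_peak_lt_alphaOfRoot_eq hq hα
  have ha0 : 0 < a := zero_lt_one.trans ha.1
  have hb0 : 0 < b := (peak_pos hq).trans hb
  refine ⟨a, b, ha, hb, hga, hgb, Set.ext fun t => ⟨?_, ?_⟩⟩
  · rintro ⟨ht, hroot⟩
    rw [fQ_eq_zero_iff ht] at hroot
    rcases le_or_gt t (peak q) with htp | htp
    · exact Or.inl <| (strictMonoOn_alphaOfRoot hq).injOn ⟨ht, htp⟩ ⟨ha0, ha.2.le⟩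
        (hroot.trans hga.symm)
    · exact Or.inr <| (strictAntiOn_alphaOfRoot hq).injOn htp.le hb.le (hroot.trans hgb.symm)
  · rintro (rfl | rfl)
    · exact ⟨ha0, (fQ_eq_zero_iff ha0).2 hga⟩
    · exact ⟨hb0, (fQ_eq_zero_iff hb0).2 hgb⟩

theorem x0_spec (hq : 2 < q) (hα : α ∈ Ioo 0 (alphaStar q)) :
    x0 q α ∈ Ioo 1 (peak q) ∧ alphaOfRoot q (x0 q α) = α := by
  obtain ⟨a, b, ha, hb, hga, -, hset⟩ := setOf_fQ_eq_zero_eq_pair hq hα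
  rw [x0, hset, csInf_pair, min_eq_left (ha.2.trans hb).le]
  exact ⟨ha, hga⟩

theorem x1_spec (hq : 2 < q) (hα : α ∈ Ioo 0 (alphaStar q)) :
    peak q < x1 q α ∧ alphaOfRoot q (x1 q α) = α := by
  obtain ⟨a, b, ha, hb, -, hgb, hset⟩ := setOf_fQ_eq_zero_eq_pair hq hα
  rw [x1, hset, csSup_pair, max_eq_right (ha.2.trans hb).le]
  exact ⟨hb, hgb⟩

theorem hasDerivAt_x0 (hq : 2 < q) (hα : α ∈ Ioo 0 (alphaStar q)) :
    HasDerivAt (x0 q) (x0 q α ^ (q + 1) / (q - (q - 2) * x0 q α ^ 2)) α := by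
  have hx : ∀ᶠ β in 𝓝 α, x0 q β ∈ Ioo 0 (peak q) ∧ alphaOfRoot q (x0 q β) = β :=
    (isOpen_Ioo.eventually_mem hα).mono fun β hβ =>
      ⟨Ioo_subset_Ioo_left zero_le_one (x0_spec hq hβ).1, (x0_spec hq hβ).2⟩
  obtain ⟨⟨ht, hpeak⟩, -⟩ := hx.self_of_nhds
  have hderiv := hasDerivAt_alphaOfRoot (q := q) ht
  have hcont := ((strictMonoOn_alphaOfRoot hq).mono
    Ioo_subset_Ioc_self).continuousAt_of_local_left_inverse hderiv.continuousAt
    (isOpen_Ioo.mem_nhds ⟨ht, hpeak⟩) hx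
  simpa only [inv_div] using hderiv.of_local_left_inverse hcont
    (div_pos ((sub_mul_sq_pos_iff_lt_peak hq ht.le).2 hpeak) (Real.rpow_pos_of_pos ht _)).ne'
    (hx.mono fun _ h => h.2)

theorem hasDerivAt_x1 (hq : 2 < q) (hα : α ∈ Ioo 0 (alphaStar q)) :
    HasDerivAt (x1 q) (x1 q α ^ (q + 1) / (q - (q - 2) * x1 q α ^ 2)) α := by
  have hx : ∀ᶠ β in 𝓝 α, x1 q β ∈ Ioi (peak q) ∧ alphaOfRoot q (x1 q β) = β :=
    (isOpen_Ioo.eventually_mem hα).mono fun β hβ => x1_spec hq hβ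
  obtain ⟨hpeak, -⟩ := x1_spec hq hα
  have ht : 0 < x1 q α := (peak_pos hq).trans hpeak
  have hderiv := hasDerivAt_alphaOfRoot (q := q) ht
  have hcont := ((strictAntiOn_alphaOfRoot hq).mono
    Ioi_subset_Ici_self).continuousAt_of_local_left_inverse hderiv.continuousAt
    (isOpen_Ioi.mem_nhds hpeak) hx
  simpa only [inv_div] using hderiv.of_local_left_inverse hcont
    (div_neg_of_neg_of_pos ((sub_mul_sq_neg_iff_peak_lt hq ht.le).2 hpeak)
      (Real.rpow_pos_of_pos ht _)).ne
    (hx.mono fun _ h => h.2)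

end Roots

/-- the roots x₀(α) < x₁(α) are differentiable in α on (0, α*(q)) with
dx_k/dα = x_k^{q+1}/(q - (q-2)x_k²); moreover dx₀/dα > 0 and dx₁/dα < 0. -/
theorem stmt_12 (q : ℝ) (hq : 2 < q) :
    ∀ α ∈ Ioo (0 : ℝ) (alphaStar q),
      (HasDerivAt (x0 q) (x0 q α ^ (q + 1) / (q - (q - 2) * x0 q α ^ 2)) α ∧
        0 < x0 q α ^ (q + 1) / (q - (q - 2) * x0 q α ^ 2)) ∧
      (HasDerivAt (x1 q) (x1 q α ^ (q + 1) / (q - (q - 2) * x1 q α ^ 2)) α ∧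
        x1 q α ^ (q + 1) / (q - (q - 2) * x1 q α ^ 2) < 0) := by
  intro α hα
  obtain ⟨⟨h1, hpeak₀⟩, -⟩ := x0_spec hq hα
  obtain ⟨hpeak₁, -⟩ := x1_spec hq hα
  have hx₀ : 0 < x0 q α := zero_lt_one.trans h1
  have hx₁ : 0 < x1 q α := (peak_pos hq).trans hpeak₁
  exact ⟨⟨hasDerivAt_x0 hq hα, div_pos (Real.rpow_pos_of_pos hx₀ _)
      ((sub_mul_sq_pos_iff_lt_peak hq hx₀.le).2 hpeak₀)⟩,
    ⟨hasDerivAt_x1 hq hα, div_neg_of_pos_of_neg (Real.rpow_pos_of_pos hx₁ _)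
      ((sub_mul_sq_neg_iff_peak_lt hq hx₁.le).2 hpeak₁)⟩⟩
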